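/- Any mechanism that robustly implements the principal's objective in the two-worker environment also robustly implements the worker-optimal outcome: let (M, φ) be any mechanism for the two-worker environment (M = M_1 × M_2, φ : M → contract pairs), and suppose σ = (σ_1, σ_2) with σ_i : {B,E} → M_i is an ex post equilibrium of (M, φ) such that for every type profile θ ∈ {B,E}², φ(σ(θ)) = f(θ), where f is the principal's social choice function. Then the strategy profile in which every worker of every type plays σ_i(E) is an ex post equilibrium of (M, φ) whose outcome at every type profile is (HM, HM). -/
import Mathlib


/-- Worker types: beginner or expert. -/
inductive WorkerType | B | E
deriving DecidableEq

/-- Contracts: salary High/Low paired with task Mixed/Delicate/Perfunctory. -/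
inductive Contract | HM | HD | LM | LP
deriving DecidableEq

/-- A worker's payoff from a contract, given the worker's own type. -/
def payoff : Contract → WorkerType → ℝ
  | .HM, .E => 4
  | .HD, .E => 2
  | .LM, .E => 1
  | .LP, .E => 0
  | .HM, .B => 4
  | .HD, .B => 2
  | .LM, .B => 2
  | .LP, .B => 4

/-- The direct mechanism: a pair of reports ↦ (worker 1's contract, worker 2's contract). -/
def directPair : WorkerType → WorkerType → Contract × Contract
  | .B, .B => (.LM, .LM)
  | .B, .E => (.LP, .HD)
  | .E, .B => (.HD, .LP)
  | .E, .E => (.HM, .HM)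

/-- Contract assigned by the direct mechanism to worker `i` under report profile `r`. -/
def directM (r : Fin 2 → WorkerType) (i : Fin 2) : Contract :=
  if i = 0 then (directPair (r 0) (r 1)).1 else (directPair (r 0) (r 1)).2

/-- Contract of worker `i` in a contract pair. -/
def contractOf (p : Contract × Contract) (i : Fin 2) : Contract :=
  if i = 0 then p.1 else p.2

/-- Any mechanism `(M, φ)` that robustly implements the principal's scf `directPair`
via an ex post equilibrium `σ` also admits the ex post equilibrium in which every
worker of every type plays `σ i E`, whose outcome at every type profile is
`(HM, HM)`. -/
theorem robust_implements_worker_optimal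
    {M : Fin 2 → Type*}
    (φ : ((i : Fin 2) → M i) → Contract × Contract)
    (σ : (i : Fin 2) → WorkerType → M i)
    -- σ is an ex post equilibrium of (M, φ)
    (hσ : ∀ (θ : Fin 2 → WorkerType) (i : Fin 2) (m : M i),
      payoff (contractOf (φ (fun j => σ j (θ j))) i) (θ i) ≥
        payoff (contractOf (φ (Function.update (fun j => σ j (θ j)) i m)) i) (θ i))
    -- σ implements the principal's social choice function
    (hout : ∀ θ : Fin 2 → WorkerType,
      φ (fun j => σ j (θ j)) = directPair (θ 0) (θ 1)) :
    -- the profile in which every worker of every type plays σ i E is an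
    -- ex post equilibrium of (M, φ) ...
    (∀ (θ : Fin 2 → WorkerType) (i : Fin 2) (m : M i),
      payoff (contractOf (φ (fun j => σ j WorkerType.E)) i) (θ i) ≥
        payoff (contractOf (φ (Function.update (fun j => σ j WorkerType.E) i m)) i) (θ i)) ∧
    -- ... whose outcome at every type profile is (HM, HM)
    (∀ _θ : Fin 2 → WorkerType,
      φ (fun j => σ j WorkerType.E) = (Contract.HM, Contract.HM)) := by
  have hE : φ (fun j => σ j WorkerType.E) = (Contract.HM, Contract.HM) :=
    hout (fun _ => WorkerType.E)
  have hmax : ∀ (c : Contract) (t : WorkerType), payoff c t ≤ 4 := by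
    intro c t; cases c <;> cases t <;> simp [payoff] <;> norm_num
  refine ⟨fun θ i m => ?_, fun _ => hE⟩
  rw [hE]
  have h4 : payoff (contractOf (Contract.HM, Contract.HM) i) (θ i) = 4 := by
    cases θ i <;> simp [contractOf, payoff] <;> split <;> simp [payoff]
  rw [h4]
  exact hmax _ _
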